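/- arXiv:1704.00931 — 2 statements merged into one kernel-verified Lean document; each statement's English description precedes it below -/
import Mathlib

section
/- Let f : [0,1] → ℝ be nondecreasing with f(1) − f(0) ≤ 1. For each m, the set of z ∈ [0,1] such that every dyadic interval of length 2^{-n} containing z (for every n ≥ m) has slope S_f > 2^m has Lebesgue measure at most 2^{-m}. Consequently, the set of z with lower pseudo-derivative +∞ has measure zero. -/
/-!
On dyadic level `n` the increments of a nondecreasing `f` over the `2 ^ n` intervals are
nonnegative and telescope to `f 1 - f 0`, so at most `2 ^ n (f 1 - f 0) / K` of them have slope
`> K`, and those intervals cover a set of measure at most `(f 1 - f 0) / K`. A point where the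
lower pseudo-derivative is `+∞` lies, for every `K`, in these sets for all large `n`, hence in their
`liminf`, which obeys the same bound; letting `K → ∞` gives measure zero.
-/

open MeasureTheory Set Filter Topology

noncomputable section

def dyadicIcc (n i : ℕ) : Set ℝ := Icc ((i : ℝ) / 2 ^ n) (((i : ℝ) + 1) / 2 ^ n)

def dyadicIncr (f : ℝ → ℝ) (n i : ℕ) : ℝ := f (((i : ℝ) + 1) / 2 ^ n) - f ((i : ℝ) / 2 ^ n)

def steepDyadicIdx (f : ℝ → ℝ) (K : ℝ) (n : ℕ) : Finset ℕ :=
  {i ∈ Finset.range (2 ^ n) | K < 2 ^ n * dyadicIncr f n i}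

def steepDyadicSet (f : ℝ → ℝ) (K : ℝ) (n : ℕ) : Set ℝ :=
  ⋃ i ∈ steepDyadicIdx f K n, dyadicIcc n i

end

theorem measure_iUnion_iInter_le {α : Type*} [MeasurableSpace α] (μ : Measure α)
    {s : ℕ → Set α} {b : ENNReal} (h : ∀ n, μ (s n) ≤ b) :
    μ (⋃ N, ⋂ n ≥ N, s n) ≤ b := by
  have hmono : Monotone fun N => ⋂ n ≥ N, s n := fun N N' hN =>
    biInter_mono (fun n hn => le_trans hN hn) fun _ _ => subset_rfl
  rw [hmono.measure_iUnion]
  exact iSup_le fun N => (measure_mono (biInter_subset_of_mem le_rfl)).trans (h N)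

theorem volume_dyadicIcc (n i : ℕ) : volume (dyadicIcc n i) = ENNReal.ofReal (1 / 2 ^ n) := by
  rw [dyadicIcc, Real.volume_Icc, ← sub_div, add_sub_cancel_left]

theorem succ_div_two_pow_le_one {n i : ℕ} (hi : i < 2 ^ n) : ((i : ℝ) + 1) / 2 ^ n ≤ 1 := by
  rw [div_le_one (by positivity)]
  exact_mod_cast hi

theorem exists_mem_dyadicIcc {z : ℝ} (hz : z ∈ Icc (0 : ℝ) 1) (n : ℕ) :
    ∃ i < 2 ^ n, z ∈ dyadicIcc n i := by
  have h2n : (0 : ℝ) < 2 ^ n := by positivity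
  have hzn : 0 ≤ z * 2 ^ n := mul_nonneg hz.1 h2n.le
  -- capping the floor at `2 ^ n - 1` handles `z = 1`
  refine ⟨min ⌊z * 2 ^ n⌋₊ (2 ^ n - 1), by have := Nat.one_le_two_pow (n := n); omega, ?_, ?_⟩
  · rw [div_le_iff₀ h2n]
    exact (Nat.cast_le.2 (min_le_left _ _)).trans (Nat.floor_le hzn)
  · rw [le_div_iff₀ h2n]
    rcases min_choice ⌊z * 2 ^ n⌋₊ (2 ^ n - 1) with h | h <;> rw [h]
    · exact (Nat.lt_floor_add_one _).le
    · rw [Nat.cast_sub Nat.one_le_two_pow]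
      push_cast
      nlinarith [hz.2]

theorem sum_dyadicIncr (f : ℝ → ℝ) (n : ℕ) :
    ∑ i ∈ Finset.range (2 ^ n), dyadicIncr f n i = f 1 - f 0 := by
  have := Finset.sum_range_sub (fun i : ℕ => f ((i : ℝ) / 2 ^ n)) (2 ^ n)
  push_cast at this
  simpa [dyadicIncr, div_self (two_ne_zero' ℝ)] using this

theorem dyadicIncr_nonneg {f : ℝ → ℝ} (hf : MonotoneOn f (Icc 0 1)) {n i : ℕ} (hi : i < 2 ^ n) :
    0 ≤ dyadicIncr f n i := by
  have hle : (i : ℝ) / 2 ^ n ≤ ((i : ℝ) + 1) / 2 ^ n := by gcongr; linarith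
  have hb := succ_div_two_pow_le_one hi
  exact sub_nonneg.2 <| hf ⟨by positivity, hle.trans hb⟩ ⟨by positivity, hb⟩ hle

theorem card_steepDyadicIdx_mul_le {f : ℝ → ℝ} (hf : MonotoneOn f (Icc 0 1)) (K : ℝ) (n : ℕ) :
    (steepDyadicIdx f K n).card * K ≤ 2 ^ n * (f 1 - f 0) := by
  calc (steepDyadicIdx f K n).card * K
      ≤ ∑ i ∈ steepDyadicIdx f K n, 2 ^ n * dyadicIncr f n i := by
        rw [← nsmul_eq_mul]
        exact Finset.card_nsmul_le_sum _ _ _ fun i hi => (Finset.mem_filter.1 hi).2.le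
    _ ≤ ∑ i ∈ Finset.range (2 ^ n), 2 ^ n * dyadicIncr f n i :=
        Finset.sum_le_sum_of_subset_of_nonneg (Finset.filter_subset _ _) fun i hi _ =>
          mul_nonneg (by positivity) (dyadicIncr_nonneg hf (Finset.mem_range.1 hi))
    _ = 2 ^ n * (f 1 - f 0) := by rw [← Finset.mul_sum, sum_dyadicIncr]

theorem volume_steepDyadicSet_le {f : ℝ → ℝ} (hf : MonotoneOn f (Icc 0 1)) {K : ℝ} (hK : 0 < K)
    (n : ℕ) : volume (steepDyadicSet f K n) ≤ ENNReal.ofReal ((f 1 - f 0) / K) := by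
  have h2n : (0 : ℝ) < 2 ^ n := by positivity
  calc volume (steepDyadicSet f K n)
      ≤ ∑ i ∈ steepDyadicIdx f K n, volume (dyadicIcc n i) := measure_biUnion_finset_le _ _
    _ = ENNReal.ofReal ((steepDyadicIdx f K n).card / 2 ^ n) := by
        rw [Finset.sum_congr rfl fun i _ => volume_dyadicIcc n i, Finset.sum_const, nsmul_eq_mul,
          ← ENNReal.ofReal_natCast, ← ENNReal.ofReal_mul (by positivity), mul_one_div]
    _ ≤ ENNReal.ofReal ((f 1 - f 0) / K) := by
        refine ENNReal.ofReal_le_ofReal ?_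
        rw [div_le_div_iff₀ h2n hK, mul_comm (f 1 - f 0)]
        exact card_steepDyadicIdx_mul_le hf K n

theorem mem_steepDyadicSet {f : ℝ → ℝ} {K : ℝ} {n i : ℕ} {z : ℝ} (hi : i < 2 ^ n)
    (hz : z ∈ dyadicIcc n i) (hK : K < 2 ^ n * dyadicIncr f n i) : z ∈ steepDyadicSet f K n :=
  mem_biUnion (Finset.mem_filter.2 ⟨Finset.mem_range.2 hi, hK⟩) hz

theorem mem_steepDyadicSet_of_slope_gt {f : ℝ → ℝ} {K δ z : ℝ} (hz : z ∈ Icc (0 : ℝ) 1)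
    (hslope : ∀ a b : ℚ, 0 ≤ (a : ℝ) → (b : ℝ) ≤ 1 → (a : ℝ) ≤ z → z ≤ (b : ℝ) →
      0 < (b : ℝ) - (a : ℝ) → (b : ℝ) - (a : ℝ) < δ →
      K < (f (b : ℝ) - f (a : ℝ)) / ((b : ℝ) - (a : ℝ)))
    {n : ℕ} (hn : 1 / 2 ^ n < δ) : z ∈ steepDyadicSet f K n := by
  obtain ⟨i, hi, hzi⟩ := exists_mem_dyadicIcc hz n
  have ha : (((i : ℚ) / 2 ^ n : ℚ) : ℝ) = (i : ℝ) / 2 ^ n := by push_cast; rfl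
  have hb : ((((i : ℚ) + 1) / 2 ^ n : ℚ) : ℝ) = ((i : ℝ) + 1) / 2 ^ n := by push_cast; rfl
  have hlen : ((i : ℝ) + 1) / 2 ^ n - (i : ℝ) / 2 ^ n = 1 / 2 ^ n := by
    rw [← sub_div, add_sub_cancel_left]
  have hslope_i := hslope ((i : ℚ) / 2 ^ n) (((i : ℚ) + 1) / 2 ^ n)
  rw [ha, hb, hlen, div_div_eq_mul_div, div_one, mul_comm] at hslope_i
  exact mem_steepDyadicSet hi hzi <|
    hslope_i (by positivity) (succ_div_two_pow_le_one hi) hzi.1 hzi.2 (by positivity) hn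

theorem stmt13 (f : ℝ → ℝ) (hmono : MonotoneOn f (Set.Icc 0 1)) (hbd : f 1 - f 0 ≤ 1) :
    (∀ m : ℕ,
      MeasureTheory.volume {z ∈ Set.Icc (0:ℝ) 1 | ∀ n ≥ m, ∀ i : ℕ, i + 1 ≤ 2 ^ n →
          z ∈ Set.Icc ((i:ℝ) / 2 ^ n) (((i:ℝ) + 1) / 2 ^ n) →
          (2:ℝ) ^ m < 2 ^ n * (f (((i:ℝ) + 1) / 2 ^ n) - f ((i:ℝ) / 2 ^ n))}
        ≤ ENNReal.ofReal ((2:ℝ) ^ (-(m:ℤ)))) ∧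
    MeasureTheory.volume {z ∈ Set.Icc (0:ℝ) 1 | ∀ K : ℝ, ∃ δ > (0:ℝ), ∀ a b : ℚ,
        0 ≤ (a:ℝ) → (b:ℝ) ≤ 1 → (a:ℝ) ≤ z → z ≤ (b:ℝ) →
        0 < (b:ℝ) - (a:ℝ) → (b:ℝ) - (a:ℝ) < δ →
        K < (f (b:ℝ) - f (a:ℝ)) / ((b:ℝ) - (a:ℝ))} = 0 := by
  refine ⟨fun m => ?_, ?_⟩
  · calc _ ≤ volume (steepDyadicSet f (2 ^ m) m) := by
          refine measure_mono ?_
          rintro z ⟨hz, hsteep⟩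
          obtain ⟨i, hi, hzi⟩ := exists_mem_dyadicIcc hz m
          exact mem_steepDyadicSet hi hzi (hsteep m le_rfl i hi hzi)
      _ ≤ ENNReal.ofReal ((f 1 - f 0) / 2 ^ m) := volume_steepDyadicSet_le hmono (by positivity) m
      _ ≤ ENNReal.ofReal ((2 : ℝ) ^ (-(m : ℤ))) := by
          rw [zpow_neg, zpow_natCast, inv_eq_one_div]
          gcongr
  · have hlim : Tendsto (fun K => ENNReal.ofReal ((f 1 - f 0) / K)) atTop (𝓝 0) :=
      ENNReal.ofReal_zero ▸ (ENNReal.continuous_ofReal.tendsto 0).comp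
        (tendsto_const_nhds.div_atTop tendsto_id)
    refine le_antisymm (ge_of_tendsto hlim ((eventually_gt_atTop 0).mono fun K hK => ?_)) zero_le
    refine (measure_mono ?_).trans
      (measure_iUnion_iInter_le volume fun n => volume_steepDyadicSet_le hmono hK n)
    rintro z ⟨hz, hsteep⟩
    obtain ⟨δ, hδ, hslope⟩ := hsteep K
    obtain ⟨N, hN⟩ := exists_pow_lt_of_lt_one hδ one_half_lt_one
    refine mem_iUnion.2 ⟨N, mem_iInter₂.2 fun n hn => mem_steepDyadicSet_of_slope_gt hz hslope ?_⟩
    calc (1 : ℝ) / 2 ^ n ≤ (1 / 2) ^ N := by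
          rw [one_div_pow]
          gcongr
          exact one_le_two
      _ < δ := hN
end

section
/- Let f : [0,1] → ℝ be nondecreasing, let 0 < γ < β be rationals, and for a fixed scheme of intervals consider nested alternating sequences A_0 ⊇ A_1 ⊇ ... ⊇ A_{2n} of intervals with S_f(A_{2i}) < γ and S_f(A_{2i+1}) > β, where within each parity class any two intervals are either disjoint or nested. Then the union of all final intervals A_{2n} of n-depth alternating sequences has outer measure at most (γ/β)^n. -/
/-!
Maximal members of a finite laminar family of intervals are pairwise disjoint and cover the
family. Given finitely many odd intervals (slope `> β`), each inside an even one (slope `< γ`),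
group them under the maximal even intervals `m`: the maximal odd intervals inside `m` are
disjoint, so by monotonicity of `f` their total length is `< Δ_f(m)/β < (γ/β)|m|`, and summing
over `m` bounds the odd union by `γ/β` times the even union. Iterating along the alternating
chains gives `(γ/β)^n`.
-/

/-- The slope of `f` over the interval coded by the pair `p`. -/
noncomputable def slopeOf (f : ℝ → ℝ) (p : ℝ × ℝ) : ℝ := (f p.2 - f p.1) / (p.2 - p.1)

open Set MeasureTheory Filter Topology

theorem countable_biUnion_Icc_diff_biUnion_Ioo {α ι : Type*} [LinearOrder α] [TopologicalSpace α]
    [OrderTopology α] [SecondCountableTopology α] (s : Set ι) (a b : ι → α)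
    (hab : ∀ i ∈ s, a i < b i) :
    ((⋃ i ∈ s, Icc (a i) (b i)) \ ⋃ i ∈ s, Ioo (a i) (b i)).Countable := by
  set W := ⋃ i ∈ s, Ioo (a i) (b i)
  refine (countable_setOfPred_isolated_right_within (s := Wᶜ)).union
    (countable_setOfPred_isolated_left_within (s := Wᶜ)) |>.mono ?_
  rintro x ⟨hx, hxW⟩
  obtain ⟨i, hi, hxi⟩ := mem_iUnion₂.1 hx
  have hIoo : Ioo (a i) (b i) ⊆ W := subset_biUnion_of_mem (u := fun i => Ioo (a i) (b i)) hi
  rcases eq_endpoints_or_mem_Ioo_of_mem_Icc hxi with rfl | rfl | hxi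
  · refine Or.inl ⟨hxW, empty_mem_iff_bot.1 ?_⟩
    have h1 : Ioo (a i) (b i) ∈ 𝓝[Wᶜ ∩ Ioi (a i)] (a i) :=
      nhdsWithin_mono _ inter_subset_right (Ioo_mem_nhdsGT (hab i hi))
    filter_upwards [h1, self_mem_nhdsWithin] with y hy hy' using hy'.1 (hIoo hy)
  · refine Or.inr ⟨hxW, empty_mem_iff_bot.1 ?_⟩
    have h1 : Ioo (a i) (b i) ∈ 𝓝[Wᶜ ∩ Iio (b i)] (b i) :=
      nhdsWithin_mono _ inter_subset_right (Ioo_mem_nhdsLT (hab i hi))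
    filter_upwards [h1, self_mem_nhdsWithin] with y hy hy' using hy'.1 (hIoo hy)
  · exact absurd (hIoo hxi) hxW

theorem MonotoneOn.sum_sub_le {f : ℝ → ℝ} {c d : ℝ} (hf : MonotoneOn f (Icc c d)) (hcd : c ≤ d)
    (F : Finset (ℝ × ℝ)) (hF : ∀ p ∈ F, c ≤ p.1 ∧ p.1 < p.2 ∧ p.2 ≤ d)
    (hdisj : (F : Set (ℝ × ℝ)).Pairwise fun p q => Disjoint (Ioo p.1 p.2) (Ioo q.1 q.2)) :
    ∑ p ∈ F, (f p.2 - f p.1) ≤ f d - f c := by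
  classical
  induction F using Finset.induction_on_max_value (fun p : ℝ × ℝ => p.1) generalizing d with
  | empty => simpa using hf ⟨le_rfl, hcd⟩ ⟨hcd, le_rfl⟩ hcd
  | insert a s ha hmax ih =>
    obtain ⟨hca, ha12, had⟩ := hF a (Finset.mem_insert_self a s)
    have hs_left : ∀ q ∈ s, q.2 ≤ a.1 := fun q hq => by
      have hqa : Disjoint (Ioo q.1 q.2) (Ioo a.1 a.2) :=
        hdisj (by simp [hq]) (by simp) (by rintro rfl; exact ha hq)
      rw [Ioo_disjoint_Ioo, max_eq_right (hmax q hq), min_le_iff] at hqa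
      exact hqa.resolve_right ha12.not_ge
    have hs := ih (hf.mono (Icc_subset_Icc_right (ha12.le.trans had))) hca
      (fun q hq => ⟨(hF q (by simp [hq])).1, (hF q (by simp [hq])).2.1, hs_left q hq⟩)
      (hdisj.mono (by simp))
    have hfa : f a.2 ≤ f d := hf ⟨hca.trans ha12.le, had⟩ ⟨hcd, le_rfl⟩ had
    rw [Finset.sum_insert ha]
    linarith

theorem lt_slopeOf_iff {f : ℝ → ℝ} {p : ℝ × ℝ} (hp : p.1 < p.2) {β : ℝ} :
    β < slopeOf f p ↔ β * (p.2 - p.1) < f p.2 - f p.1 :=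
  lt_div_iff₀ (sub_pos.2 hp)

theorem slopeOf_lt_iff {f : ℝ → ℝ} {p : ℝ × ℝ} (hp : p.1 < p.2) {γ : ℝ} :
    slopeOf f p < γ ↔ f p.2 - f p.1 < γ * (p.2 - p.1) :=
  div_lt_iff₀ (sub_pos.2 hp)

def IsLaminar (S : Set (ℝ × ℝ)) : Prop :=
  ∀ p ∈ S, ∀ q ∈ S, Icc p.1 p.2 ⊆ Icc q.1 q.2 ∨ Icc q.1 q.2 ⊆ Icc p.1 p.2 ∨
    Disjoint (Ioo p.1 p.2) (Ioo q.1 q.2)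

theorem IsLaminar.mono {S T : Set (ℝ × ℝ)} (hT : IsLaminar T) (hST : S ⊆ T) : IsLaminar S :=
  fun p hp q hq => hT p (hST hp) q (hST hq)

theorem IsLaminar.exists_pairwiseDisjoint_subcover {F : Finset (ℝ × ℝ)} (hF : IsLaminar F)
    (hlt : ∀ p ∈ F, p.1 < p.2) :
    ∃ M ⊆ F, (M : Set (ℝ × ℝ)).Pairwise (fun p q => Disjoint (Ioo p.1 p.2) (Ioo q.1 q.2)) ∧
      ∀ p ∈ F, ∃ m ∈ M, Icc p.1 p.2 ⊆ Icc m.1 m.2 := by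
  classical
  have hinj : ∀ p ∈ F, ∀ q ∈ F, Icc p.1 p.2 ⊆ Icc q.1 q.2 → q.2 - q.1 ≤ p.2 - p.1 → p = q :=
    fun p hp q hq hpq hlen => by
      rw [Icc_subset_Icc_iff (hlt p hp).le] at hpq
      exact Prod.ext (by linarith) (by linarith)
  refine ⟨F.filter fun m => ∀ r ∈ F, Icc m.1 m.2 ⊆ Icc r.1 r.2 → r = m,
    Finset.filter_subset _ _, ?_, fun p hp => ?_⟩
  · intro m hm m' hm' hne
    simp only [Finset.mem_coe, Finset.mem_filter] at hm hm'
    rcases hF m hm.1 m' hm'.1 with h | h | h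
    · exact absurd (hm.2 m' hm'.1 h) (Ne.symm hne)
    · exact absurd (hm'.2 m hm.1 h) hne
    · exact h
  · -- a longest interval of `F` containing `p` is maximal for inclusion
    obtain ⟨m, hm, hmax⟩ := (F.filter fun r => Icc p.1 p.2 ⊆ Icc r.1 r.2).exists_max_image
      (fun r => r.2 - r.1) ⟨p, by simp [hp]⟩
    rw [Finset.mem_filter] at hm
    refine ⟨m, Finset.mem_filter.2 ⟨hm.1, fun r hr hmr => ?_⟩, hm.2⟩
    exact (hinj m hm.1 r hr hmr (hmax r (Finset.mem_filter.2 ⟨hr, hm.2.trans hmr⟩))).symm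

theorem MonotoneOn.volume_biUnion_Icc_le_div {f : ℝ → ℝ} {c d β : ℝ} (hf : MonotoneOn f (Icc c d))
    (hcd : c ≤ d) (hβ : 0 < β) {F : Finset (ℝ × ℝ)} (hF : IsLaminar F)
    (hFcd : ∀ p ∈ F, c ≤ p.1 ∧ p.1 < p.2 ∧ p.2 ≤ d)
    (hFβ : ∀ p ∈ F, β * (p.2 - p.1) < f p.2 - f p.1) :
    volume (⋃ p ∈ F, Icc p.1 p.2) ≤ ENNReal.ofReal ((f d - f c) / β) := by
  obtain ⟨M, hMF, hMdisj, hMcov⟩ := hF.exists_pairwiseDisjoint_subcover fun p hp => (hFcd p hp).2.1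
  have hlen : ∑ p ∈ M, (p.2 - p.1) ≤ (f d - f c) / β := by
    rw [le_div_iff₀ hβ, Finset.sum_mul]
    calc ∑ p ∈ M, (p.2 - p.1) * β ≤ ∑ p ∈ M, (f p.2 - f p.1) :=
          Finset.sum_le_sum fun p hp => by linarith [hFβ p (hMF hp)]
      _ ≤ f d - f c := hf.sum_sub_le hcd M (fun p hp => hFcd p (hMF hp)) hMdisj
  calc volume (⋃ p ∈ F, Icc p.1 p.2) ≤ volume (⋃ m ∈ M, Icc m.1 m.2) := by
        refine measure_mono (iUnion₂_subset fun p hp => ?_)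
        obtain ⟨m, hm, hpm⟩ := hMcov p hp
        exact hpm.trans (subset_biUnion_of_mem (u := fun m : ℝ × ℝ => Icc m.1 m.2) hm)
    _ ≤ ∑ m ∈ M, volume (Icc m.1 m.2) := measure_biUnion_finset_le _ _
    _ = ENNReal.ofReal (∑ m ∈ M, (m.2 - m.1)) := by
        simp only [Real.volume_Icc]
        exact (ENNReal.ofReal_sum_of_nonneg fun m hm => sub_nonneg.2 (hFcd m (hMF hm)).2.1.le).symm
    _ ≤ ENNReal.ofReal ((f d - f c) / β) := ENNReal.ofReal_le_ofReal hlen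

theorem volume_biUnion_Icc_finset_le_mul {f : ℝ → ℝ} {s : Set ℝ} {γ β : ℝ} (hf : MonotoneOn f s)
    (hγ : 0 ≤ γ) (hβ : 0 < β) {F : Finset (ℝ × ℝ)} {E : Set (ℝ × ℝ)} (hF : IsLaminar F)
    (hE : IsLaminar E) (hFlt : ∀ p ∈ F, p.1 < p.2) (hFβ : ∀ p ∈ F, β < slopeOf f p)
    (hElt : ∀ q ∈ E, q.1 < q.2) (hEs : ∀ q ∈ E, Icc q.1 q.2 ⊆ s)
    (hEγ : ∀ q ∈ E, slopeOf f q < γ) (hcov : ∀ p ∈ F, ∃ q ∈ E, Icc p.1 p.2 ⊆ Icc q.1 q.2) :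
    volume (⋃ p ∈ F, Icc p.1 p.2) ≤ ENNReal.ofReal (γ / β) * volume (⋃ q ∈ E, Icc q.1 q.2) := by
  classical
  choose! φ hφE hφ using hcov
  have hGE : ↑(F.image φ) ⊆ E := by
    intro q hq
    obtain ⟨p, hp, rfl⟩ := Finset.mem_image.1 hq
    exact hφE p hp
  obtain ⟨M, hMG, hMdisj, hMcov⟩ := (hE.mono hGE).exists_pairwiseDisjoint_subcover
    fun q hq => hElt q (hGE hq)
  have hME : ∀ m ∈ M, m ∈ E := fun m hm => hGE (hMG hm)
  have hbound : ∀ m ∈ M, volume (⋃ p ∈ F.filter (fun p => Icc p.1 p.2 ⊆ Icc m.1 m.2), Icc p.1 p.2)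
      ≤ ENNReal.ofReal (γ / β) * volume (Ioo m.1 m.2) := fun m hm => by
    have hmlt := hElt m (hME m hm)
    rw [Real.volume_Ioo, ← ENNReal.ofReal_mul (div_nonneg hγ hβ.le)]
    refine ((hf.mono (hEs m (hME m hm))).volume_biUnion_Icc_le_div hmlt.le hβ
      (hF.mono (Finset.coe_subset.2 (Finset.filter_subset _ _))) (fun p hp => ?_)
      (fun p hp => ?_)).trans (ENNReal.ofReal_le_ofReal ?_)
    · rw [Finset.mem_filter] at hp
      have hp' := (Icc_subset_Icc_iff (hFlt p hp.1).le).1 hp.2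
      exact ⟨hp'.1, hFlt p hp.1, hp'.2⟩
    · rw [Finset.mem_filter] at hp
      exact (lt_slopeOf_iff (hFlt p hp.1)).1 (hFβ p hp.1)
    · rw [div_le_iff₀ hβ, mul_right_comm, div_mul_cancel₀ _ hβ.ne']
      exact ((slopeOf_lt_iff hmlt).1 (hEγ m (hME m hm))).le
  calc volume (⋃ p ∈ F, Icc p.1 p.2)
      ≤ volume (⋃ m ∈ M, ⋃ p ∈ F.filter (fun p => Icc p.1 p.2 ⊆ Icc m.1 m.2), Icc p.1 p.2) := by
        refine measure_mono (iUnion₂_subset fun p hp => ?_)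
        obtain ⟨m, hm, hpm⟩ := hMcov (φ p) (Finset.mem_image_of_mem φ hp)
        refine subset_iUnion₂_of_subset m hm (subset_iUnion₂_of_subset p ?_ subset_rfl)
        exact Finset.mem_filter.2 ⟨hp, (hφ p hp).trans hpm⟩
    _ ≤ ∑ m ∈ M, ENNReal.ofReal (γ / β) * volume (Ioo m.1 m.2) :=
        (measure_biUnion_finset_le _ _).trans (Finset.sum_le_sum hbound)
    _ = ENNReal.ofReal (γ / β) * volume (⋃ m ∈ M, Ioo m.1 m.2) := by
        rw [← Finset.mul_sum, measure_biUnion_finset hMdisj fun m _ => measurableSet_Ioo]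
    _ ≤ ENNReal.ofReal (γ / β) * volume (⋃ q ∈ E, Icc q.1 q.2) := by
        refine mul_le_mul_right (measure_mono (iUnion₂_subset fun m hm => ?_)) _
        exact Ioo_subset_Icc_self.trans
          (subset_biUnion_of_mem (u := fun q : ℝ × ℝ => Icc q.1 q.2) (hME m hm))

theorem volume_biUnion_Icc_le_mul {f : ℝ → ℝ} {s : Set ℝ} {γ β : ℝ} (hf : MonotoneOn f s)
    (hγ : 0 ≤ γ) (hβ : 0 < β) {J E : Set (ℝ × ℝ)} (hJ : IsLaminar J)
    (hE : IsLaminar E) (hJlt : ∀ p ∈ J, p.1 < p.2) (hJβ : ∀ p ∈ J, β < slopeOf f p)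
    (hElt : ∀ q ∈ E, q.1 < q.2) (hEs : ∀ q ∈ E, Icc q.1 q.2 ⊆ s)
    (hEγ : ∀ q ∈ E, slopeOf f q < γ) (hcov : ∀ p ∈ J, ∃ q ∈ E, Icc p.1 p.2 ⊆ Icc q.1 q.2) :
    volume (⋃ p ∈ J, Icc p.1 p.2) ≤ ENNReal.ofReal (γ / β) * volume (⋃ q ∈ E, Icc q.1 q.2) := by
  -- The closed intervals add only countably many endpoints to the open union, and the open
  -- union is exhausted by compact sets, each covered by finitely many of the intervals.
  have hendpoints := countable_biUnion_Icc_diff_biUnion_Ioo J Prod.fst Prod.snd hJlt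
  calc volume (⋃ p ∈ J, Icc p.1 p.2) ≤ volume (⋃ p ∈ J, Ioo p.1 p.2) :=
        measure_mono_ae (ae_le_set.2 (hendpoints.measure_zero _))
    _ ≤ ENNReal.ofReal (γ / β) * volume (⋃ q ∈ E, Icc q.1 q.2) := by
        rw [(isOpen_biUnion fun p _ => isOpen_Ioo).measure_eq_iSup_isCompact]
        refine iSup₂_le fun K hKJ => iSup_le fun hK => ?_
        obtain ⟨F, hFJ, hF, hKF⟩ := hK.elim_finite_subcover_image (fun p _ => isOpen_Ioo) hKJ
        have hFJ' : ∀ p ∈ hF.toFinset, p ∈ J := fun p hp => hFJ (hF.mem_toFinset.1 hp)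
        refine (measure_mono (hKF.trans ?_)).trans (volume_biUnion_Icc_finset_le_mul hf hγ hβ
          (F := hF.toFinset) (hJ.mono (by simpa using hFJ)) hE (fun p hp => hJlt p (hFJ' p hp))
          (fun p hp => hJβ p (hFJ' p hp)) hElt hEs hEγ fun p hp => hcov p (hFJ' p hp))
        exact iUnion₂_subset fun p hp => Ioo_subset_Icc_self.trans
          (subset_biUnion_of_mem (u := fun p : ℝ × ℝ => Icc p.1 p.2) (hF.mem_toFinset.2 hp))

def alternatingChainEnds (f : ℝ → ℝ) (γ β : ℝ) (E O : Set (ℝ × ℝ)) (n : ℕ) : Set ℝ :=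
  {x | ∃ A : ℕ → ℝ × ℝ,
    (∀ i < 2 * n, Icc (A (i + 1)).1 (A (i + 1)).2 ⊆ Icc (A i).1 (A i).2) ∧
    (∀ i ≤ n, A (2 * i) ∈ E ∧ slopeOf f (A (2 * i)) < γ) ∧
    (∀ i < n, A (2 * i + 1) ∈ O ∧ β < slopeOf f (A (2 * i + 1))) ∧
    x ∈ Icc (A (2 * n)).1 (A (2 * n)).2}

section alternatingChainEnds

variable {f : ℝ → ℝ} {γ β : ℝ} {E O : Set (ℝ × ℝ)}

theorem alternatingChainEnds_zero_subset (hE : ∀ q ∈ E, Icc q.1 q.2 ⊆ Icc 0 1) :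
    alternatingChainEnds f γ β E O 0 ⊆ Icc 0 1 := by
  rintro x ⟨A, -, hAE, -, hx⟩
  exact hE _ (hAE 0 le_rfl).1 hx

theorem alternatingChainEnds_succ_subset (n : ℕ) :
    alternatingChainEnds f γ β E O (n + 1) ⊆
      ⋃ p ∈ {p ∈ O | β < slopeOf f p ∧ ∃ q ∈ {q ∈ E | slopeOf f q < γ ∧
        Icc q.1 q.2 ⊆ alternatingChainEnds f γ β E O n}, Icc p.1 p.2 ⊆ Icc q.1 q.2},
        Icc p.1 p.2 := by
  rintro x ⟨A, hnest, hAE, hAO, hx⟩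
  have hq : Icc (A (2 * n)).1 (A (2 * n)).2 ⊆ alternatingChainEnds f γ β E O n :=
    fun y hy => ⟨A, fun i hi => hnest i (by omega), fun i hi => hAE i (by omega),
      fun i hi => hAO i (by omega), hy⟩
  refine mem_biUnion (x := A (2 * n + 1)) ⟨(hAO n n.lt_succ_self).1, (hAO n n.lt_succ_self).2,
    A (2 * n), ⟨(hAE n n.le_succ).1, (hAE n n.le_succ).2, hq⟩, hnest (2 * n) (by omega)⟩ ?_
  exact hnest (2 * n + 1) (by omega) hx

theorem volume_alternatingChainEnds_le (hf : MonotoneOn f (Icc 0 1)) (hγ : 0 ≤ γ) (hβ : 0 < β)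
    (hE : ∀ q ∈ E, 0 ≤ q.1 ∧ q.1 < q.2 ∧ q.2 ≤ 1) (hO : ∀ p ∈ O, 0 ≤ p.1 ∧ p.1 < p.2 ∧ p.2 ≤ 1)
    (hEl : IsLaminar E) (hOl : IsLaminar O) (n : ℕ) :
    volume (alternatingChainEnds f γ β E O n) ≤ ENNReal.ofReal ((γ / β) ^ n) := by
  have hE01 : ∀ q ∈ E, Icc q.1 q.2 ⊆ Icc 0 1 := fun q hq => Icc_subset_Icc (hE q hq).1 (hE q hq).2.2
  induction n with
  | zero => simpa using measure_mono (μ := volume) (alternatingChainEnds_zero_subset hE01)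
  | succ n ih =>
    calc volume (alternatingChainEnds f γ β E O (n + 1))
        ≤ ENNReal.ofReal (γ / β) * volume (⋃ q ∈ {q ∈ E | slopeOf f q < γ ∧
            Icc q.1 q.2 ⊆ alternatingChainEnds f γ β E O n}, Icc q.1 q.2) :=
          (measure_mono (alternatingChainEnds_succ_subset n)).trans <|
            volume_biUnion_Icc_le_mul hf hγ hβ (hOl.mono fun p hp => hp.1)
              (hEl.mono fun q hq => hq.1) (fun p hp => (hO p hp.1).2.1) (fun p hp => hp.2.1)
              (fun q hq => (hE q hq.1).2.1) (fun q hq => hE01 q hq.1) (fun q hq => hq.2.1)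
              (fun p hp => hp.2.2)
      _ ≤ ENNReal.ofReal (γ / β) * ENNReal.ofReal ((γ / β) ^ n) :=
          mul_le_mul_right ((measure_mono (iUnion₂_subset fun q hq => hq.2.2)).trans ih) _
      _ = ENNReal.ofReal ((γ / β) ^ (n + 1)) := by
          rw [pow_succ', ENNReal.ofReal_mul (div_nonneg hγ hβ.le)]

end alternatingChainEnds

theorem stmt14 (f : ℝ → ℝ) (hf : MonotoneOn f (Set.Icc 0 1))
    (γ β : ℚ) (hγ : 0 < γ) (hγβ : γ < β) (n : ℕ)
    (E O : Set (ℝ × ℝ))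
    (hE : ∀ p ∈ E, 0 ≤ p.1 ∧ p.1 < p.2 ∧ p.2 ≤ 1)
    (hO : ∀ p ∈ O, 0 ≤ p.1 ∧ p.1 < p.2 ∧ p.2 ≤ 1)
    -- within each class, any two intervals are nested or have disjoint interiors:
    (hEd : ∀ p ∈ E, ∀ q ∈ E, Set.Icc p.1 p.2 ⊆ Set.Icc q.1 q.2 ∨
      Set.Icc q.1 q.2 ⊆ Set.Icc p.1 p.2 ∨ Disjoint (Set.Ioo p.1 p.2) (Set.Ioo q.1 q.2))
    (hOd : ∀ p ∈ O, ∀ q ∈ O, Set.Icc p.1 p.2 ⊆ Set.Icc q.1 q.2 ∨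
      Set.Icc q.1 q.2 ⊆ Set.Icc p.1 p.2 ∨ Disjoint (Set.Ioo p.1 p.2) (Set.Ioo q.1 q.2)) :
    MeasureTheory.volume {x : ℝ | ∃ A : ℕ → ℝ × ℝ,
      (∀ i < 2 * n, Set.Icc (A (i+1)).1 (A (i+1)).2 ⊆ Set.Icc (A i).1 (A i).2) ∧
      (∀ i ≤ n, A (2 * i) ∈ E ∧ slopeOf f (A (2 * i)) < (γ:ℝ)) ∧
      (∀ i < n, A (2 * i + 1) ∈ O ∧ (β:ℝ) < slopeOf f (A (2 * i + 1))) ∧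
      x ∈ Set.Icc (A (2 * n)).1 (A (2 * n)).2}
      ≤ ENNReal.ofReal (((γ:ℝ) / (β:ℝ)) ^ n) :=
  volume_alternatingChainEnds_le hf (by exact_mod_cast hγ.le)
    (by exact_mod_cast hγ.trans hγβ) hE hO hEd hOd n
end
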